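/- Let n, m be positive integers and β > 0. Let Γ : ℝⁿ → ℝ^{(n+m)×(n+m)} and Σ : ℝⁿ → ℝ^{(n+m)×(n+m)} be continuous and bounded, let F : ℝⁿ → ℝⁿ be continuous and bounded, and let C ∈ ℝ^{(n+m)×(n+m)} be symmetric positive definite such that for some λ > 0 one has zᵀ(Γ(q)ᵀC + CΓ(q))z ≥ λ·zᵀCz for all q ∈ ℝⁿ and z ∈ ℝ^{n+m}. Then there exist θ > 0 and b ∈ ℝ such that the function K_θ(q,p,s) = exp((θ/2)·zᵀCz), with z = (p,s), satisfies (L K_θ)(q,p,s) ≤ −K_θ(q,p,s) + b for all (q,p,s) ∈ ℝⁿ×ℝⁿ×ℝᵐ. -/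

import Mathlib

open Matrix

/-- The coordinate direction in the `q`-variable. -/
noncomputable def eQ (n m : ℕ) (i : Fin n) : (Fin n → ℝ) × (Fin n → ℝ) × (Fin m → ℝ) :=
  (Pi.single i 1, 0, 0)

/-- The coordinate direction in the `p`-variable. -/
noncomputable def eP (n m : ℕ) (i : Fin n) : (Fin n → ℝ) × (Fin n → ℝ) × (Fin m → ℝ) :=
  (0, Pi.single i 1, 0)

/-- The coordinate direction in the `s`-variable. -/
noncomputable def eS (n m : ℕ) (j : Fin m) : (Fin n → ℝ) × (Fin n → ℝ) × (Fin m → ℝ) :=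
  (0, 0, Pi.single j 1)

/-- The coordinate direction in the `z = (p,s)`-variable. -/
noncomputable def eZ (n m : ℕ) : Fin (n + m) → (Fin n → ℝ) × (Fin n → ℝ) × (Fin m → ℝ) :=
  Fin.addCases (eP n m) (eS n m)

/-- The generator of the quasi-Markovian generalized Langevin equation:
`(Lφ)(q,p,s) = ⟨F(q), ∇_p φ⟩ + ⟨p, ∇_q φ⟩ − ⟨Γ(q)z, ∇_z φ⟩
  + (1/(2β)) ∑_{i,j} (Σ(q)Σ(q)ᵀ)_{ij} ∂²φ/∂z_i∂z_j`, where `z = (p,s)`. -/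
noncomputable def gleGen {n m : ℕ} (β : ℝ)
    (F : (Fin n → ℝ) → (Fin n → ℝ))
    (Γ Sig : (Fin n → ℝ) → Matrix (Fin (n + m)) (Fin (n + m)) ℝ)
    (φ : (Fin n → ℝ) × (Fin n → ℝ) × (Fin m → ℝ) → ℝ)
    (x : (Fin n → ℝ) × (Fin n → ℝ) × (Fin m → ℝ)) : ℝ :=
  let z : Fin (n + m) → ℝ := Fin.addCases x.2.1 x.2.2
  (∑ i, F x.1 i * fderiv ℝ φ x (eP n m i))
    + (∑ i, x.2.1 i * fderiv ℝ φ x (eQ n m i))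
    - (∑ i, (Γ x.1).mulVec z i * fderiv ℝ φ x (eZ n m i))
    + (1 / (2 * β)) * ∑ i, ∑ j,
        (Sig x.1 * (Sig x.1)ᵀ) i j * fderiv ℝ (fun y => fderiv ℝ φ y (eZ n m j)) x (eZ n m i)

/-!
Since `K_θ = exp ((θ/2) zᵀCz)` depends on `z = (p, s)` only, with `w = Cz` one computes
`L K_θ = θ K_θ (⟨F, w_p⟩ - ⟨Γz, w⟩ + (tr (ΣΣᵀC) + θ wᵀΣΣᵀw) / (2β))`.
Coercivity gives `⟨Γz, w⟩ ≥ (λ/2) zᵀCz`, and `zᵀCz` dominates `|z|²` because `C` is positive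
definite; so the drift term is absorbed up to a constant and, for `θ` small, so is the noise
term: the bracket is at most `K - (λ/8) zᵀCz`. Finally `e^{θQ/2} (1 + θK - θλQ/8)` is bounded
above for `Q ≥ 0`, which is `L K_θ ≤ -K_θ + b`.
-/

section PhaseSpace

variable {n m : ℕ}

noncomputable def zCoord (n m : ℕ) :
    ((Fin n → ℝ) × (Fin n → ℝ) × (Fin m → ℝ)) →L[ℝ] (Fin (n + m) → ℝ) :=
  LinearMap.toContinuousLinearMap
    { toFun := fun x => Fin.addCases x.2.1 x.2.2
      map_add' := fun x y => funext <| Fin.addCases (by simp) (by simp)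
      map_smul' := fun c x => funext <| Fin.addCases (by simp) (by simp) }

lemma zCoord_apply (x : (Fin n → ℝ) × (Fin n → ℝ) × (Fin m → ℝ)) :
    zCoord n m x = Fin.addCases x.2.1 x.2.2 := rfl

lemma zCoord_eQ (i : Fin n) : zCoord n m (eQ n m i) = 0 :=
  funext <| Fin.addCases (by simp [zCoord_apply, eQ]) (by simp [zCoord_apply, eQ])

lemma zCoord_eZ (j : Fin (n + m)) : zCoord n m (eZ n m j) = Pi.single j 1 := by
  ext k
  induction j using Fin.addCases <;> induction k using Fin.addCases <;>
    simp [zCoord_apply, eZ, eP, eS, Pi.single_apply, Fin.ext_iff] <;> omega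

lemma zCoord_eP (i : Fin n) : zCoord n m (eP n m i) = Pi.single (Fin.castAdd m i) 1 := by
  simpa [eZ] using zCoord_eZ (n := n) (m := m) (Fin.castAdd m i)

end PhaseSpace

section ExpQuad

variable {ι : Type*} [Fintype ι]

noncomputable def expQuad (θ : ℝ) (C : Matrix ι ι ℝ) (z : ι → ℝ) : ℝ :=
  Real.exp (θ / 2 * (z ⬝ᵥ C *ᵥ z))

variable {C : Matrix ι ι ℝ}

lemma Matrix.IsSymm.mulVec_dotProduct_comm (hC : C.IsSymm) (u v : ι → ℝ) :
    (C *ᵥ u) ⬝ᵥ v = (C *ᵥ v) ⬝ᵥ u := by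
  rw [dotProduct_comm, dotProduct_mulVec, ← mulVec_transpose, hC.eq]

lemma hasFDerivAt_dotProduct_mulVec_self (hC : C.IsSymm) (z : ι → ℝ) :
    HasFDerivAt (fun y => y ⬝ᵥ C *ᵥ y)
      ((2 : ℝ) • (dotProductBilin ℝ ℝ (C *ᵥ z)).toContinuousLinearMap) z := by
  have hsum : HasFDerivAt (fun y : ι → ℝ => ∑ i, y i * (C *ᵥ y) i)
      (∑ i, (z i • (ContinuousLinearMap.proj i).comp (mulVecLin C).toContinuousLinearMap
        + (C *ᵥ z) i • ContinuousLinearMap.proj i)) z :=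
    HasFDerivAt.fun_sum fun i _ => (hasFDerivAt_apply i z).mul
      ((ContinuousLinearMap.proj i).comp (mulVecLin C).toContinuousLinearMap).hasFDerivAt
  refine hsum.congr_fderiv (ContinuousLinearMap.ext fun v => ?_)
  have hsymm := (dotProduct_comm z _).trans (hC.mulVec_dotProduct_comm v z)
  simp only [dotProduct] at hsymm
  simp [Finset.sum_add_distrib, hsymm, two_mul, dotProduct, mul_comm]

variable (θ : ℝ)

lemma hasFDerivAt_expQuad (hC : C.IsSymm) (z : ι → ℝ) :
    HasFDerivAt (expQuad θ C)
      ((θ * expQuad θ C z) • (dotProductBilin ℝ ℝ (C *ᵥ z)).toContinuousLinearMap) z :=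
  ((hasFDerivAt_dotProduct_mulVec_self hC z).const_mul (θ / 2)).exp.congr_fderiv <|
    ContinuousLinearMap.ext fun v => by simp [expQuad]; ring

lemma differentiable_expQuad (hC : C.IsSymm) : Differentiable ℝ (expQuad θ C) :=
  fun z => (hasFDerivAt_expQuad θ hC z).differentiableAt

lemma fderiv_expQuad_apply (hC : C.IsSymm) (z v : ι → ℝ) :
    fderiv ℝ (expQuad θ C) z v = θ * expQuad θ C z * ((C *ᵥ z) ⬝ᵥ v) := by
  simp [(hasFDerivAt_expQuad θ hC z).fderiv]

lemma fderiv_expQuad_apply_eq (hC : C.IsSymm) (u : ι → ℝ) :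
    (fun y => fderiv ℝ (expQuad θ C) y u)
      = fun y => θ * expQuad θ C y * (dotProductBilin ℝ ℝ (C *ᵥ u)).toContinuousLinearMap y := by
  ext y
  rw [fderiv_expQuad_apply θ hC, hC.mulVec_dotProduct_comm]
  rfl

lemma differentiable_fderiv_expQuad_apply (hC : C.IsSymm) (u : ι → ℝ) :
    Differentiable ℝ fun y => fderiv ℝ (expQuad θ C) y u := by
  rw [fderiv_expQuad_apply_eq θ hC]
  exact ((differentiable_expQuad θ hC).const_mul θ).mul (ContinuousLinearMap.differentiable _)

lemma fderiv_fderiv_expQuad_apply (hC : C.IsSymm) (z u v : ι → ℝ) :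
    fderiv ℝ (fun y => fderiv ℝ (expQuad θ C) y u) z v
      = θ * expQuad θ C z * ((C *ᵥ u) ⬝ᵥ v + θ * ((C *ᵥ z) ⬝ᵥ u) * ((C *ᵥ z) ⬝ᵥ v)) := by
  have h := ((hasFDerivAt_expQuad θ hC z).const_mul θ).fun_mul
    (dotProductBilin ℝ ℝ (C *ᵥ u)).toContinuousLinearMap.hasFDerivAt
  rw [fderiv_expQuad_apply_eq θ hC, h.fderiv]
  simp [hC.mulVec_dotProduct_comm u z]
  ring

end ExpQuad

lemma fderiv_comp_continuousLinearMap_apply {𝕜 E F G : Type*} [NontriviallyNormedField 𝕜]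
    [NormedAddCommGroup E] [NormedSpace 𝕜 E] [NormedAddCommGroup F] [NormedSpace 𝕜 F]
    [NormedAddCommGroup G] [NormedSpace 𝕜 G] (L : E →L[𝕜] F) {g : F → G} {y : E}
    (hg : DifferentiableAt 𝕜 g (L y)) (v : E) :
    fderiv 𝕜 (g ∘ L) y v = fderiv 𝕜 g (L y) (L v) := by
  rw [fderiv_comp y hg L.differentiableAt, L.fderiv]
  rfl

section Generator

variable {n m : ℕ} (β : ℝ) (F : (Fin n → ℝ) → (Fin n → ℝ))
  (Γ Sig : (Fin n → ℝ) → Matrix (Fin (n + m)) (Fin (n + m)) ℝ)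

lemma gleGen_comp_zCoord {f : (Fin (n + m) → ℝ) → ℝ} (hf : Differentiable ℝ f)
    (hf' : ∀ j, Differentiable ℝ fun z => fderiv ℝ f z (Pi.single j 1))
    (x : (Fin n → ℝ) × (Fin n → ℝ) × (Fin m → ℝ)) :
    gleGen β F Γ Sig (f ∘ zCoord n m) x =
      ∑ i, F x.1 i * fderiv ℝ f (zCoord n m x) (Pi.single (Fin.castAdd m i) 1)
      - ∑ i, (Γ x.1 *ᵥ zCoord n m x) i * fderiv ℝ f (zCoord n m x) (Pi.single i 1)
      + 1 / (2 * β) * ∑ i, ∑ j, (Sig x.1 * (Sig x.1)ᵀ) i j *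
          fderiv ℝ (fun z => fderiv ℝ f z (Pi.single j 1)) (zCoord n m x) (Pi.single i 1) := by
  have hd : ∀ y v, fderiv ℝ (f ∘ zCoord n m) y v = fderiv ℝ f (zCoord n m y) (zCoord n m v) :=
    fun y => fderiv_comp_continuousLinearMap_apply _ (hf _)
  have hd2 : ∀ j, (fun y => fderiv ℝ (f ∘ zCoord n m) y (eZ n m j))
      = (fun z => fderiv ℝ f z (Pi.single j 1)) ∘ zCoord n m := fun j => by
    ext y
    simp only [Function.comp_apply, hd, zCoord_eZ]
  simp only [gleGen, hd2, fderiv_comp_continuousLinearMap_apply _ (hf' _ _)]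
  simp only [hd, zCoord_eP, zCoord_eQ, zCoord_eZ, map_zero, mul_zero, Finset.sum_const_zero,
    add_zero]
  rfl

lemma gleGen_expQuad_comp_zCoord (θ : ℝ) {C : Matrix (Fin (n + m)) (Fin (n + m)) ℝ}
    (hC : C.IsSymm) (x : (Fin n → ℝ) × (Fin n → ℝ) × (Fin m → ℝ)) :
    gleGen β F Γ Sig (expQuad θ C ∘ zCoord n m) x =
      θ * expQuad θ C (zCoord n m x) *
        (F x.1 ⬝ᵥ (fun i => (C *ᵥ zCoord n m x) (Fin.castAdd m i))
          - (Γ x.1 *ᵥ zCoord n m x) ⬝ᵥ (C *ᵥ zCoord n m x)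
          + 1 / (2 * β) * (trace (Sig x.1 * (Sig x.1)ᵀ * C)
            + θ * ((C *ᵥ zCoord n m x) ⬝ᵥ (Sig x.1 * (Sig x.1)ᵀ) *ᵥ (C *ᵥ zCoord n m x)))) := by
  rw [gleGen_comp_zCoord β F Γ Sig (differentiable_expQuad θ hC)
    (fun j => differentiable_fderiv_expQuad_apply θ hC _)]
  simp only [fderiv_fderiv_expQuad_apply θ hC]
  simp only [fderiv_expQuad_apply θ hC, dotProduct_single, mulVec_single_one, mul_one]
  set w := C *ᵥ zCoord n m x
  set A := Sig x.1 * (Sig x.1)ᵀ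
  have hsecond : trace (A * C) + θ * (w ⬝ᵥ A *ᵥ w)
      = ∑ i, ∑ j, A i j * (C.col j i + θ * w j * w i) := by
    simp only [trace, diag, mul_apply, dotProduct, mulVec, Finset.mul_sum,
      ← Finset.sum_add_distrib, col_apply, hC.apply]
    exact Finset.sum_congr rfl fun i _ => Finset.sum_congr rfl fun j _ => by ring
  simp_rw [hsecond, mul_left_comm _ (θ * expQuad θ C _), ← Finset.mul_sum, dotProduct]
  ring

end Generator

section Estimates

attribute [local instance] Matrix.linftyOpNormedAddCommGroup Matrix.linftyOpNormedRing

variable {ι κ : Type*} [Fintype ι] [Fintype κ]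

lemma abs_dotProduct_le (v w : ι → ℝ) :
    |v ⬝ᵥ w| ≤ Fintype.card ι * ‖v‖ * ‖w‖ := by
  calc |v ⬝ᵥ w| ≤ ∑ i, ‖v i‖ * ‖w i‖ := by
        simpa [dotProduct, abs_mul] using Finset.abs_sum_le_sum_abs (fun i => v i * w i) _
    _ ≤ ∑ _i : ι, ‖v‖ * ‖w‖ := Finset.sum_le_sum fun i _ =>
        mul_le_mul (norm_le_pi_norm v i) (norm_le_pi_norm w i) (norm_nonneg _) (norm_nonneg _)
    _ = _ := by simp [mul_assoc]

lemma dotProduct_comp_le (v : κ → ℝ) (w : ι → ℝ) (e : κ → ι) :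
    v ⬝ᵥ (w ∘ e) ≤ Fintype.card κ * ‖v‖ * ‖w‖ :=
  (le_abs_self _).trans <| (abs_dotProduct_le v _).trans <| by gcongr; exact pi_norm_comp_le w e

lemma Matrix.linfty_opNorm_le_of_abs_le {A : Matrix κ ι ℝ} {R : ℝ} (hR : 0 ≤ R)
    (hA : ∀ i j, |A i j| ≤ R) : ‖A‖ ≤ Fintype.card ι * R := by
  lift R to NNReal using hR
  have hrow : ∀ i, ∑ j, ‖A i j‖₊ ≤ Fintype.card ι * R := fun i => by
    simpa using Finset.sum_le_card_nsmul Finset.univ _ R fun j _ => (hA i j : ‖A i j‖ ≤ R)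
  rw [linfty_opNorm_def]
  exact_mod_cast Finset.sup_le fun i _ => hrow i

lemma Matrix.abs_trace_le_linfty_opNorm [DecidableEq ι] (A : Matrix ι ι ℝ) :
    |trace A| ≤ Fintype.card ι * ‖A‖ := by
  have hdiag : ∀ i, |A i i| ≤ ‖A‖ := fun i => by
    calc |A i i| = ‖(A *ᵥ Pi.single i 1) i‖ := by simp
      _ ≤ ‖A *ᵥ Pi.single i 1‖ := norm_le_pi_norm _ i
      _ ≤ ‖A‖ * ‖(Pi.single i 1 : ι → ℝ)‖ := linfty_opNorm_mulVec _ _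
      _ = ‖A‖ := by simp [Pi.norm_single]
  calc |trace A| ≤ ∑ i, |A i i| := Finset.abs_sum_le_sum_abs _ _
    _ ≤ ∑ _i : ι, ‖A‖ := Finset.sum_le_sum fun i _ => hdiag i
    _ = _ := by simp

lemma dotProduct_mulVec_self_le (A : Matrix ι ι ℝ) (w : ι → ℝ) :
    w ⬝ᵥ A *ᵥ w ≤ Fintype.card ι * ‖A‖ * ‖w‖ ^ 2 :=
  calc w ⬝ᵥ A *ᵥ w ≤ Fintype.card ι * ‖w‖ * ‖A *ᵥ w‖ :=
        (le_abs_self _).trans (abs_dotProduct_le _ _)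
    _ ≤ Fintype.card ι * ‖w‖ * (‖A‖ * ‖w‖) := by gcongr; exact linfty_opNorm_mulVec A w
    _ = Fintype.card ι * ‖A‖ * ‖w‖ ^ 2 := by ring

lemma Matrix.trace_mul_le [DecidableEq ι] (A C : Matrix ι ι ℝ) :
    trace (A * C) ≤ Fintype.card ι * ‖A‖ * ‖C‖ :=
  calc trace (A * C) ≤ Fintype.card ι * ‖A * C‖ :=
        (le_abs_self _).trans (abs_trace_le_linfty_opNorm _)
    _ ≤ Fintype.card ι * (‖A‖ * ‖C‖) := by gcongr; exact linfty_opNorm_mul A C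
    _ = _ := by ring

lemma Matrix.linfty_opNorm_mul_transpose_le {S : Matrix ι ι ℝ} {R : ℝ} (hR : 0 ≤ R)
    (hS : ∀ i j, |S i j| ≤ R) : ‖S * Sᵀ‖ ≤ (Fintype.card ι * R) ^ 2 :=
  calc ‖S * Sᵀ‖ ≤ ‖S‖ * ‖Sᵀ‖ := linfty_opNorm_mul _ _
    _ ≤ (Fintype.card ι * R) * (Fintype.card ι * R) := by
        gcongr
        · exact linfty_opNorm_le_of_abs_le hR hS
        · exact linfty_opNorm_le_of_abs_le hR fun i j => hS j i
    _ = _ := by ring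

lemma Matrix.trace_mul_add_mul_dotProduct_mulVec_le [DecidableEq ι] (A C : Matrix ι ι ℝ)
    {θ : ℝ} (hθ : 0 ≤ θ) (z : ι → ℝ) :
    trace (A * C) + θ * ((C *ᵥ z) ⬝ᵥ A *ᵥ (C *ᵥ z))
      ≤ Fintype.card ι * ‖A‖ * (‖C‖ + θ * (‖C‖ * ‖z‖) ^ 2) := by
  have hquad : θ * ((C *ᵥ z) ⬝ᵥ A *ᵥ (C *ᵥ z)) ≤ θ * (Fintype.card ι * ‖A‖ * (‖C‖ * ‖z‖) ^ 2) := by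
    gcongr
    exact (dotProduct_mulVec_self_le _ _).trans (by gcongr; exact linfty_opNorm_mulVec C z)
  linarith [trace_mul_le A C]

end Estimates

lemma Matrix.PosDef.exists_mul_sq_norm_le {ι : Type*} [Fintype ι] {C : Matrix ι ι ℝ}
    (hC : C.PosDef) : ∃ μ > 0, ∀ z : ι → ℝ, μ * ‖z‖ ^ 2 ≤ z ⬝ᵥ C *ᵥ z := by
  rcases isEmpty_or_nonempty ι with hι | hι
  · exact ⟨1, one_pos, fun z => by simp [Subsingleton.elim z 0]⟩
  have hcont : Continuous fun z : ι → ℝ => z ⬝ᵥ C *ᵥ z :=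
    continuous_id.dotProduct (continuous_const.matrix_mulVec continuous_id)
  obtain ⟨z₀, hz₀, hmin⟩ := (isCompact_sphere (0 : ι → ℝ) 1).exists_isMinOn
    (NormedSpace.sphere_nonempty.2 zero_le_one) hcont.continuousOn
  refine ⟨_, by simpa using hC.dotProduct_mulVec_pos (ne_zero_of_mem_unit_sphere ⟨z₀, hz₀⟩),
    fun z => ?_⟩
  rcases eq_or_ne z 0 with rfl | hz
  · simp
  have hnz : 0 < ‖z‖ := norm_pos_iff.2 hz
  have hu : ‖z‖⁻¹ • z ∈ Metric.sphere (0 : ι → ℝ) 1 := by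
    simp [norm_smul, hnz.ne']
  have hscale : z₀ ⬝ᵥ C *ᵥ z₀ ≤ ‖z‖⁻¹ ^ 2 * (z ⬝ᵥ C *ᵥ z) := by
    simpa [mulVec_smul, pow_two, mul_assoc] using hmin hu
  calc z₀ ⬝ᵥ C *ᵥ z₀ * ‖z‖ ^ 2 ≤ ‖z‖⁻¹ ^ 2 * (z ⬝ᵥ C *ᵥ z) * ‖z‖ ^ 2 := by gcongr
    _ = z ⬝ᵥ C *ᵥ z := by field_simp

lemma Matrix.IsSymm.dotProduct_transpose_mul_add_mul_mulVec {ι : Type*} [Fintype ι]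
    {C : Matrix ι ι ℝ} (hC : C.IsSymm) (G : Matrix ι ι ℝ) (z : ι → ℝ) :
    z ⬝ᵥ (Gᵀ * C + C * G) *ᵥ z = 2 * ((G *ᵥ z) ⬝ᵥ (C *ᵥ z)) := by
  rw [add_mulVec, dotProduct_add, ← mulVec_mulVec, ← mulVec_mulVec, dotProduct_mulVec,
    vecMul_transpose, dotProduct_comm z, hC.mulVec_dotProduct_comm, dotProduct_comm]
  ring

lemma mul_le_mul_sq_add_sq_div {d : ℝ} (hd : 0 < d) (c t : ℝ) :
    c * t ≤ d * t ^ 2 + c ^ 2 / (4 * d) := by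
  have h : c ^ 2 / (4 * d) * (4 * d) = c ^ 2 := div_mul_cancel₀ _ (by positivity)
  nlinarith [sq_nonneg (2 * d * t - c)]

section DriftBound

attribute [local instance] Matrix.linftyOpNormedAddCommGroup Matrix.linftyOpNormedRing

variable {n m : ℕ} {β : ℝ} {F : (Fin n → ℝ) → (Fin n → ℝ)}
  {Γ Sig : (Fin n → ℝ) → Matrix (Fin (n + m)) (Fin (n + m)) ℝ}

lemma exists_drift_le (hF : ∃ R : ℝ, ∀ q, ‖F q‖ ≤ R) (C : Matrix (Fin (n + m)) (Fin (n + m)) ℝ) :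
    ∃ c, ∀ (q : Fin n → ℝ) (z : Fin (n + m) → ℝ),
      (F q ⬝ᵥ fun i => (C *ᵥ z) (Fin.castAdd m i)) ≤ c * ‖z‖ := by
  obtain ⟨RF, hRF⟩ := hF
  refine ⟨n * max RF 0 * ‖C‖, fun q z => ?_⟩
  have h := dotProduct_comp_le (F q) (C *ᵥ z) (Fin.castAdd m)
  rw [Fintype.card_fin] at h
  calc _ ≤ n * ‖F q‖ * ‖C *ᵥ z‖ := h
    _ ≤ n * max RF 0 * (‖C‖ * ‖z‖) := by
        gcongr
        · exact (hRF q).trans (le_max_left _ _)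
        · exact linfty_opNorm_mulVec C z
    _ = n * max RF 0 * ‖C‖ * ‖z‖ := by ring

lemma exists_noise_le (hSig : ∃ R : ℝ, ∀ q i j, |Sig q i j| ≤ R)
    (C : Matrix (Fin (n + m)) (Fin (n + m)) ℝ) :
    ∃ a ≥ 0, ∀ (q : Fin n → ℝ) (z : Fin (n + m) → ℝ) (θ : ℝ), 0 ≤ θ →
      trace (Sig q * (Sig q)ᵀ * C) + θ * ((C *ᵥ z) ⬝ᵥ (Sig q * (Sig q)ᵀ) *ᵥ (C *ᵥ z))
        ≤ a * (‖C‖ + θ * (‖C‖ * ‖z‖) ^ 2) := by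
  obtain ⟨R, hR⟩ := hSig
  set N : ℝ := (Fintype.card (Fin (n + m)) : ℝ)
  refine ⟨N * (N * max R 0) ^ 2, by positivity, fun q z θ hθ => ?_⟩
  refine (trace_mul_add_mul_dotProduct_mulVec_le _ _ hθ z).trans ?_
  gcongr
  exact linfty_opNorm_mul_transpose_le (le_max_right _ _)
    fun i j => (hR q i j).trans (le_max_left _ _)

lemma exists_drift_bound {C : Matrix (Fin (n + m)) (Fin (n + m)) ℝ} {lam : ℝ} (hβ : 0 < β)
    (hSig : ∃ R : ℝ, ∀ q i j, |Sig q i j| ≤ R) (hF : ∃ R : ℝ, ∀ q, ‖F q‖ ≤ R) (hC : C.PosDef)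
    (hlam : 0 < lam)
    (hcoer : ∀ (q : Fin n → ℝ) (z : Fin (n + m) → ℝ),
      lam * (z ⬝ᵥ C.mulVec z) ≤ z ⬝ᵥ ((Γ q)ᵀ * C + C * Γ q).mulVec z) :
    ∃ θ > 0, ∃ K, ∀ (q : Fin n → ℝ) (z : Fin (n + m) → ℝ),
      (F q ⬝ᵥ fun i => (C *ᵥ z) (Fin.castAdd m i)) - (Γ q *ᵥ z) ⬝ᵥ (C *ᵥ z)
        + 1 / (2 * β) * (trace (Sig q * (Sig q)ᵀ * C)
          + θ * ((C *ᵥ z) ⬝ᵥ (Sig q * (Sig q)ᵀ) *ᵥ (C *ᵥ z)))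
      ≤ K - lam / 8 * (z ⬝ᵥ C *ᵥ z) := by
  obtain ⟨c, hD⟩ := exists_drift_le hF C
  obtain ⟨a, ha, hnoise⟩ := exists_noise_le hSig C
  obtain ⟨μ, hμ, hμC⟩ := hC.exists_mul_sq_norm_le
  have hCs : C.IsSymm := isHermitian_iff_isSymm.1 hC.isHermitian
  -- small enough for the noise term `θ wᵀΣΣᵀw / (2β)` to stay below `(λ/4) μ |z|²`
  set θ := β * lam * μ / (2 * (a * ‖C‖ ^ 2 + 1))
  have hθ : θ * (a * ‖C‖ ^ 2) ≤ β * lam * μ / 2 :=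
    calc θ * (a * ‖C‖ ^ 2) ≤ θ * (a * ‖C‖ ^ 2 + 1) := by gcongr; linarith
      _ = β * lam * μ / 2 := by simp only [θ]; field_simp
  refine ⟨θ, by positivity, c ^ 2 / (4 * (lam * μ / 8)) + a * ‖C‖ / (2 * β), fun q z => ?_⟩
  have hΓ : lam / 2 * (z ⬝ᵥ C *ᵥ z) ≤ (Γ q *ᵥ z) ⬝ᵥ (C *ᵥ z) := by
    have := hcoer q z
    rw [hCs.dotProduct_transpose_mul_add_mul_mulVec] at this
    linarith
  have hnoise' : 1 / (2 * β) * (trace (Sig q * (Sig q)ᵀ * C)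
      + θ * ((C *ᵥ z) ⬝ᵥ (Sig q * (Sig q)ᵀ) *ᵥ (C *ᵥ z)))
      ≤ a * ‖C‖ / (2 * β) + lam / 4 * (μ * ‖z‖ ^ 2) :=
    calc _ ≤ 1 / (2 * β) * (a * (‖C‖ + θ * (‖C‖ * ‖z‖) ^ 2)) := by
          gcongr; exact hnoise q z θ (by positivity)
      _ = 1 / (2 * β) * (a * ‖C‖ + θ * (a * ‖C‖ ^ 2) * ‖z‖ ^ 2) := by ring
      _ ≤ 1 / (2 * β) * (a * ‖C‖ + β * lam * μ / 2 * ‖z‖ ^ 2) := by gcongr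
      _ = a * ‖C‖ / (2 * β) + lam / 4 * (μ * ‖z‖ ^ 2) := by field_simp; ring
  have hyoung := mul_le_mul_sq_add_sq_div (d := lam * μ / 8) (by positivity) c ‖z‖
  have hQ := mul_le_mul_of_nonneg_left (hμC z) hlam.le
  linarith [hD q z]

end DriftBound

lemma exp_mul_mul_sub_le {c κ Q : ℝ} (a : ℝ) (hc : 0 ≤ c) (hκ : 0 < κ) (hQ : 0 ≤ Q) :
    Real.exp (c * Q) * (a - κ * Q) ≤ Real.exp (c * (|a| / κ)) * |a| := by
  rcases le_or_gt Q (|a| / κ) with hle | hlt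
  · have hexp : Real.exp (c * Q) ≤ Real.exp (c * (|a| / κ)) := by gcongr
    calc Real.exp (c * Q) * (a - κ * Q) ≤ Real.exp (c * Q) * |a| := by
          gcongr; linarith [le_abs_self a, mul_nonneg hκ.le hQ]
      _ ≤ Real.exp (c * (|a| / κ)) * |a| := by gcongr
  · have : a - κ * Q ≤ 0 := by
      rw [div_lt_iff₀ hκ] at hlt
      linarith [le_abs_self a]
    exact (mul_nonpos_of_nonneg_of_nonpos (Real.exp_pos _).le this).trans (by positivity)

lemma exists_mul_exp_mul_sub_le_neg_exp_add {θ κ : ℝ} (K : ℝ) (hθ : 0 < θ) (hκ : 0 < κ) :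
    ∃ b, ∀ Q, 0 ≤ Q →
      θ * Real.exp (θ / 2 * Q) * (K - κ * Q) ≤ -Real.exp (θ / 2 * Q) + b := by
  refine ⟨Real.exp (θ / 2 * (|1 + θ * K| / (θ * κ))) * |1 + θ * K|, fun Q hQ => ?_⟩
  have h := exp_mul_mul_sub_le (1 + θ * K) (by positivity : 0 ≤ θ / 2) (mul_pos hθ hκ) hQ
  linarith

theorem stmt6_general {n m : ℕ} (β : ℝ) (hβ : 0 < β)
    (Γ Sig : (Fin n → ℝ) → Matrix (Fin (n + m)) (Fin (n + m)) ℝ)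
    (hSigbdd : ∃ R : ℝ, ∀ q i j, |Sig q i j| ≤ R)
    (F : (Fin n → ℝ) → (Fin n → ℝ))
    (hFbdd : ∃ R : ℝ, ∀ q, ‖F q‖ ≤ R)
    (C : Matrix (Fin (n + m)) (Fin (n + m)) ℝ) (hC : C.PosDef)
    (lam : ℝ) (hlam : 0 < lam)
    (hcoer : ∀ (q : Fin n → ℝ) (z : Fin (n + m) → ℝ),
      lam * (z ⬝ᵥ C.mulVec z) ≤ z ⬝ᵥ ((Γ q)ᵀ * C + C * Γ q).mulVec z) :
    ∃ θ : ℝ, 0 < θ ∧ ∃ b : ℝ,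
      ∀ x : (Fin n → ℝ) × (Fin n → ℝ) × (Fin m → ℝ),
        gleGen β F Γ Sig
          (fun y => Real.exp ((θ / 2) * ((Fin.addCases y.2.1 y.2.2 : Fin (n + m) → ℝ) ⬝ᵥ
              C.mulVec (Fin.addCases y.2.1 y.2.2)))) x
        ≤ -Real.exp ((θ / 2) * ((Fin.addCases x.2.1 x.2.2 : Fin (n + m) → ℝ) ⬝ᵥ
              C.mulVec (Fin.addCases x.2.1 x.2.2))) + b := by
  obtain ⟨θ, hθ, K, hK⟩ := exists_drift_bound hβ hSigbdd hFbdd hC hlam hcoer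
  obtain ⟨b, hb⟩ := exists_mul_exp_mul_sub_le_neg_exp_add K hθ (by positivity : 0 < lam / 8)
  refine ⟨θ, hθ, b, fun x => ?_⟩
  change gleGen β F Γ Sig (expQuad θ C ∘ zCoord n m) x ≤ -expQuad θ C (zCoord n m x) + b
  rw [gleGen_expQuad_comp_zCoord β F Γ Sig θ (isHermitian_iff_isSymm.1 hC.isHermitian)]
  exact (mul_le_mul_of_nonneg_left (hK _ _) (mul_pos hθ (Real.exp_pos _)).le).trans
    (hb _ (hC.posSemidef.dotProduct_mulVec_nonneg _))

/-- Exponential Lyapunov estimate for the GLE with configuration-dependent coefficients on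
the torus: there exist `θ > 0` and `b` such that `K_θ(q,p,s) = exp((θ/2)·zᵀCz)` satisfies
`L K_θ ≤ −K_θ + b`. -/
theorem stmt6 {n m : ℕ} (hn : 0 < n) (hm : 0 < m) (β : ℝ) (hβ : 0 < β)
    (Γ Sig : (Fin n → ℝ) → Matrix (Fin (n + m)) (Fin (n + m)) ℝ)
    (hΓcont : ∀ i j, Continuous (fun q => Γ q i j))
    (hSigcont : ∀ i j, Continuous (fun q => Sig q i j))
    (hΓbdd : ∃ R : ℝ, ∀ q i j, |Γ q i j| ≤ R)
    (hSigbdd : ∃ R : ℝ, ∀ q i j, |Sig q i j| ≤ R)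
    (F : (Fin n → ℝ) → (Fin n → ℝ)) (hFcont : Continuous F)
    (hFbdd : ∃ R : ℝ, ∀ q, ‖F q‖ ≤ R)
    (C : Matrix (Fin (n + m)) (Fin (n + m)) ℝ) (hC : C.PosDef)
    (lam : ℝ) (hlam : 0 < lam)
    (hcoer : ∀ (q : Fin n → ℝ) (z : Fin (n + m) → ℝ),
      lam * (z ⬝ᵥ C.mulVec z) ≤ z ⬝ᵥ ((Γ q)ᵀ * C + C * Γ q).mulVec z) :
    ∃ θ : ℝ, 0 < θ ∧ ∃ b : ℝ,
      ∀ x : (Fin n → ℝ) × (Fin n → ℝ) × (Fin m → ℝ),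
        gleGen β F Γ Sig
          (fun y => Real.exp ((θ / 2) * ((Fin.addCases y.2.1 y.2.2 : Fin (n + m) → ℝ) ⬝ᵥ
              C.mulVec (Fin.addCases y.2.1 y.2.2)))) x
        ≤ -Real.exp ((θ / 2) * ((Fin.addCases x.2.1 x.2.2 : Fin (n + m) → ℝ) ⬝ᵥ
              C.mulVec (Fin.addCases x.2.1 x.2.2))) + b :=
  stmt6_general β hβ Γ Sig hSigbdd F hFbdd C hC lam hlam hcoer
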